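/- Let n ≥ 3 be an integer and let 0 < α < (n−2)/n. Then the infimum of N_α(p) · I_α(p) over all smooth probability densities p on ℝⁿ (with ∫ p^α dx < ∞ and I_α(p) < ∞) is 0; that is, for every ε > 0 there exists a smooth probability density p on ℝⁿ with N_α(p) · I_α(p) < ε. -/

import Mathlib

open MeasureTheory Real

set_option maxHeartbeats 2000000
set_option synthInstance.maxHeartbeats 400000
set_option linter.unusedVariables false

section AuxLemmas

variable {n : ℕ}

lemma myIntAux {s : ℝ} (hs : (n : ℝ) < 2 * s) :
    Integrable (fun x : EuclideanSpace ℝ (Fin n) => (1 + ‖x‖ ^ 2) ^ (-s)) := by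
  have h : Integrable (fun x : EuclideanSpace ℝ (Fin n) => ((1:ℝ) + ‖x‖ ^ 2) ^ (-(2*s)/2)) volume :=
    integrable_rpow_neg_one_add_norm_sq (by rw [finrank_euclideanSpace_fin]; exact hs)
  have h2 : -(2*s)/2 = -s := by ring
  simpa [h2] using h

lemma myPosAux {s : ℝ} (hs : (n : ℝ) < 2 * s) (hn : 1 ≤ n) :
    0 < ∫ x : EuclideanSpace ℝ (Fin n), (1 + ‖x‖ ^ 2) ^ (-s) := by
  rw [integral_pos_iff_support_of_nonneg (fun x => by positivity) (myIntAux hs)]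
  have h : Function.support (fun x : EuclideanSpace ℝ (Fin n) => (1 + ‖x‖ ^ 2) ^ (-s))
      = Set.univ := by
    ext x; simp only [Function.mem_support, Set.mem_univ, iff_true]
    positivity
  rw [h]
  haveI : Nontrivial (EuclideanSpace ℝ (Fin n)) :=
    Module.nontrivial_of_finrank_pos (R := ℝ)
      (by rw [finrank_euclideanSpace_fin]; omega)
  have huniv : (volume : Measure (EuclideanSpace ℝ (Fin n))) Set.univ = ⊤ :=
    MeasureTheory.measure_univ_of_isAddLeftInvariant _
  rw [huniv]; exact ENNReal.zero_lt_top

lemma myAddRpow {a b p : ℝ} (ha : 0 ≤ a) (hb : 0 ≤ b) (hp0 : 0 ≤ p) (hp1 : p ≤ 1) :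
    (a + b) ^ p ≤ a ^ p + b ^ p := by
  have h := NNReal.rpow_add_le_add_rpow a.toNNReal b.toNNReal hp0 hp1
  rw [← Real.toNNReal_add ha hb] at h
  have h2 := NNReal.coe_le_coe.2 h
  rwa [NNReal.coe_rpow, NNReal.coe_add, NNReal.coe_rpow, NNReal.coe_rpow,
    Real.coe_toNNReal _ (by positivity), Real.coe_toNNReal _ ha, Real.coe_toNNReal _ hb] at h2

lemma myNormGradient (f : EuclideanSpace ℝ (Fin n) → ℝ) (x : EuclideanSpace ℝ (Fin n)) :
    ‖gradient f x‖ = ‖fderiv ℝ f x‖ := by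
  rw [gradient]
  exact LinearIsometryEquiv.norm_map _ _

lemma myHasFDeriv (β : ℝ) (x : EuclideanSpace ℝ (Fin n)) :
    HasFDerivAt (fun y : EuclideanSpace ℝ (Fin n) => (1 + ‖y‖ ^ 2) ^ (-β))
      ((-(2 * β) * (1 + ‖x‖ ^ 2) ^ (-β - 1)) • (innerSL ℝ x)) x := by
  have h1 : HasFDerivAt (fun y : EuclideanSpace ℝ (Fin n) => 1 + ‖y‖ ^ 2)
      (2 • (innerSL ℝ x)) x := by
    simpa using (hasStrictFDerivAt_norm_sq x).hasFDerivAt.const_add 1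
  have h2 : HasDerivAt (fun t : ℝ => t ^ (-β)) (-β * (1 + ‖x‖ ^ 2) ^ (-β - 1)) (1 + ‖x‖ ^ 2) := by
    have h := Real.hasDerivAt_rpow_const (x := 1 + ‖x‖ ^ 2) (p := -β)
      (Or.inl (by positivity))
    simpa [mul_comm] using h
  have h3 := h2.comp_hasFDerivAt x h1
  refine h3.congr_fderiv ?_
  ext y
  simp only [ContinuousLinearMap.smul_apply, ContinuousLinearMap.coe_smul']
  simp [smul_smul, smul_eq_mul]
  ring

lemma myDerivNormBound (β : ℝ) (hβ : 0 ≤ β) (x : EuclideanSpace ℝ (Fin n)) :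
    ‖(-(2 * β) * (1 + ‖x‖ ^ 2) ^ (-β - 1)) • (innerSL ℝ x)‖
      ≤ 2 * β * (1 + ‖x‖ ^ 2) ^ (-β - 1) * ‖x‖ := by
  have hns := norm_smul (-(2 * β) * (1 + ‖x‖ ^ 2) ^ (-β - 1)) ((innerSL ℝ) x)
  rw [hns, innerSL_apply_norm]
  have h1 : ‖-(2 * β) * (1 + ‖x‖ ^ 2) ^ (-β - 1)‖ = 2 * β * (1 + ‖x‖ ^ 2) ^ (-β - 1) := by
    rw [Real.norm_eq_abs, abs_mul, abs_neg, abs_of_nonneg (by positivity),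
      abs_of_nonneg (Real.rpow_nonneg (by positivity) _)]
  rw [h1]

lemma myKeyPointwise {V : Type*} [NormedAddCommGroup V] (α β : ℝ) (x : V) :
    (2 * β * (1 + ‖x‖ ^ 2) ^ (-β - 1) * ‖x‖) ^ 2 * ((1 + ‖x‖ ^ 2) ^ (-β)) ^ (α - 2)
      ≤ 4 * β ^ 2 * (1 + ‖x‖ ^ 2) ^ (-(α * β + 1)) := by
  have ht : (0:ℝ) < 1 + ‖x‖ ^ 2 := by positivity
  have h1 : ((1 + ‖x‖ ^ 2) ^ (-β - 1)) ^ 2 = (1 + ‖x‖ ^ 2) ^ ((-β - 1) * 2) := by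
    rw [← Real.rpow_natCast ((1 + ‖x‖ ^ 2) ^ (-β - 1)) 2, ← Real.rpow_mul ht.le]
    norm_num
  have h2 : ((1 + ‖x‖ ^ 2) ^ (-β)) ^ (α - 2) = (1 + ‖x‖ ^ 2) ^ (-β * (α - 2)) := by
    rw [← Real.rpow_mul ht.le]
  calc (2 * β * (1 + ‖x‖ ^ 2) ^ (-β - 1) * ‖x‖) ^ 2 * ((1 + ‖x‖ ^ 2) ^ (-β)) ^ (α - 2)
      = 4 * β ^ 2 * ‖x‖ ^ 2 *
        (((1 + ‖x‖ ^ 2) ^ (-β - 1)) ^ 2 * ((1 + ‖x‖ ^ 2) ^ (-β)) ^ (α - 2)) := by ring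
    _ = 4 * β ^ 2 * ‖x‖ ^ 2 * (1 + ‖x‖ ^ 2) ^ ((-β - 1) * 2 + -β * (α - 2)) := by
        rw [h1, h2, ← Real.rpow_add ht]
    _ ≤ 4 * β ^ 2 * ((1 + ‖x‖ ^ 2) * (1 + ‖x‖ ^ 2) ^ ((-β - 1) * 2 + -β * (α - 2))) := by
        rw [mul_assoc]
        refine mul_le_mul_of_nonneg_left ?_ (by positivity)
        exact mul_le_mul_of_nonneg_right (by nlinarith [sq_nonneg ‖x‖])
          (Real.rpow_nonneg ht.le _)
    _ = 4 * β ^ 2 * (1 + ‖x‖ ^ 2) ^ (1 + ((-β - 1) * 2 + -β * (α - 2))) := by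
        rw [Real.rpow_add ht 1 ((-β - 1) * 2 + -β * (α - 2)), Real.rpow_one]
    _ = 4 * β ^ 2 * (1 + ‖x‖ ^ 2) ^ (-(α * β + 1)) := by
        ring_nf

lemma mySqBound {x u v : ℝ} (hx : 0 ≤ x) (h : x ≤ u + v) (hu : 0 ≤ u) (hv : 0 ≤ v) :
    x ^ 2 ≤ 2 * u ^ 2 + 2 * v ^ 2 := by
  nlinarith [sq_nonneg (u - v)]

lemma mySqMulRpow {w : ℝ} (hw : 0 < w) (α : ℝ) : w ^ 2 * w ^ (α - 2) = w ^ α := by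
  rw [← Real.rpow_natCast w 2, ← Real.rpow_add hw]
  norm_num

end AuxLemmas

/-- The Rényi entropy power of order `α` of a density `p` on `ℝⁿ`. -/
noncomputable def renyiEntropyPower (n : ℕ) (α : ℝ) (p : EuclideanSpace ℝ (Fin n) → ℝ) : ℝ :=
  (∫ x, p x ^ α) ^ (-2 / ((n : ℝ) * (α - 1)))

/-- The Rényi–Fisher information of order `α` of a density `p` on `ℝⁿ`. -/
noncomputable def renyiFisherInfo (n : ℕ) (α : ℝ) (p : EuclideanSpace ℝ (Fin n) → ℝ) : ℝ :=
  α * (∫ x in {x | 0 < p x}, ‖gradient p x‖ ^ 2 * p x ^ (α - 2)) / (∫ x, p x ^ α)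

theorem renyi_entropic_isoperimetric_subcritical_alpha_infimum_zero
    (n : ℕ) (hn : 3 ≤ n) (α : ℝ) (hα0 : 0 < α) (hα1 : α < ((n : ℝ) - 2) / n)
    (ε : ℝ) (hε : 0 < ε) :
    ∃ p : EuclideanSpace ℝ (Fin n) → ℝ,
      ContDiff ℝ (⊤ : ℕ∞) p ∧ (∀ x, 0 ≤ p x) ∧ Integrable p ∧ (∫ x, p x) = 1 ∧
      (Integrable fun x => p x ^ α) ∧
      IntegrableOn (fun x => ‖gradient p x‖ ^ 2 * p x ^ (α - 2)) {x | 0 < p x} ∧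
      renyiEntropyPower n α p * renyiFisherInfo n α p < ε := by
  have hn1 : 1 ≤ n := by omega
  have hnR : (0:ℝ) < n := by exact_mod_cast Nat.pos_of_ne_zero (by omega)
  have hαn : α * n < (n:ℝ) - 2 := (lt_div_iff₀ hnR).mp hα1
  have hαlt1 : α < 1 := by nlinarith
  set m : ℝ := (n:ℝ) * (1 - α) with hm_def
  have hm2 : 2 < m := by rw [hm_def]; nlinarith
  have hm0 : 0 < m := by linarith
  set β : ℝ := (n:ℝ) / α with hβ_def
  have hβ0 : 0 < β := div_pos hnR hα0
  have hαβ : α * β = n := by rw [hβ_def]; field_simp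
  have hβn : (n:ℝ) < 2 * β := by
    have h1 : (n:ℝ) < (n:ℝ) / α := by rw [lt_div_iff₀ hα0]; nlinarith
    rw [hβ_def]; linarith [div_pos hnR hα0]
  -- base integrabilities
  have hq_int : Integrable (fun x : EuclideanSpace ℝ (Fin n) => (1 + ‖x‖ ^ 2) ^ (-β)) :=
    myIntAux hβn
  have hAA_int : Integrable (fun x : EuclideanSpace ℝ (Fin n) => (1 + ‖x‖ ^ 2) ^ (-(α * β))) :=
    myIntAux (by rw [hαβ]; linarith)
  have hH0_int : Integrable
      (fun x : EuclideanSpace ℝ (Fin n) => (1 + ‖x‖ ^ 2) ^ (-(α * β + 1))) :=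
    myIntAux (by rw [hαβ]; linarith)
  have hH_int : Integrable
      (fun x : EuclideanSpace ℝ (Fin n) => 4 * β ^ 2 * (1 + ‖x‖ ^ 2) ^ (-(α * β + 1))) :=
    hH0_int.const_mul _
  set A : ℝ := ∫ x : EuclideanSpace ℝ (Fin n), (1 + ‖x‖ ^ 2) ^ (-β) with hA_def
  have hA : 0 < A := myPosAux hβn hn1
  set AA : ℝ := ∫ x : EuclideanSpace ℝ (Fin n), (1 + ‖x‖ ^ 2) ^ (-(α * β)) with hAA_def
  have hAA : 0 < AA := myPosAux (by rw [hαβ]; linarith) hn1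
  set JH : ℝ := ∫ x : EuclideanSpace ℝ (Fin n), 4 * β ^ 2 * (1 + ‖x‖ ^ 2) ^ (-(α * β + 1))
    with hJH_def
  have hJH : 0 ≤ JH := integral_nonneg (fun x => by positivity)
  -- choice of the scale t
  set e : ℝ := 2 / m - 1 with he_def
  have he : e < 0 := by
    have h1 : 2 / m < 1 := (div_lt_one hm0).2 hm2
    rw [he_def]; linarith
  set C : ℝ := α * (4 * (A⁻¹) ^ α * JH) * (((2 * A)⁻¹) ^ α * AA) ^ e with hC_def
  obtain ⟨t, htε, ht1⟩ : ∃ t : ℝ, C * t ^ (2 * e) < ε ∧ 1 ≤ t := by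
    have h2e : (0:ℝ) < -(2 * e) := by linarith
    have htend := tendsto_rpow_neg_atTop h2e
    rw [neg_neg] at htend
    have htend2 : Filter.Tendsto (fun s : ℝ => C * s ^ (2 * e)) Filter.atTop (nhds 0) := by
      simpa using htend.const_mul C
    exact ((htend2.eventually_lt_const hε).and (Filter.eventually_ge_atTop 1)).exists
  have ht0 : (0:ℝ) < t := lt_of_lt_of_le one_pos ht1
  -- parameters
  set b : ℝ := t ^ (-(m - 2) / α) with hb_def
  have hb0 : 0 < b := Real.rpow_pos_of_pos ht0 _
  have hb1 : b ≤ 1 := Real.rpow_le_one_of_one_le_of_nonpos ht1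
    (by apply div_nonpos_of_nonpos_of_nonneg <;> linarith)
  have hbα : b ^ α = t ^ (2 - m) := by
    rw [hb_def, ← Real.rpow_mul ht0.le]
    congr 1
    field_simp
    ring
  set d : ℝ := b * t ^ (-(n:ℝ)) with hd_def
  have hd0 : 0 < d := mul_pos hb0 (Real.rpow_pos_of_pos ht0 _)
  have hdα : d ^ α * t ^ ((n:ℝ) - 2) = 1 := by
    rw [hd_def, Real.mul_rpow hb0.le (Real.rpow_pos_of_pos ht0 _).le, hbα,
      ← Real.rpow_mul ht0.le, ← Real.rpow_add ht0, ← Real.rpow_add ht0]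
    rw [show 2 - m + -(n:ℝ) * α + ((n:ℝ) - 2) = 0 by rw [hm_def]; ring, Real.rpow_zero]
  set c : ℝ := (A * (1 + b))⁻¹ with hc_def
  have hc0 : 0 < c := by rw [hc_def]; positivity
  have hcle : c ≤ A⁻¹ := by
    rw [hc_def]
    apply inv_anti₀ hA
    nlinarith
  have hcge : (2 * A)⁻¹ ≤ c := by
    rw [hc_def]
    apply inv_anti₀ (by positivity)
    nlinarith
  -- the density
  set q : EuclideanSpace ℝ (Fin n) → ℝ := fun x => (1 + ‖x‖ ^ 2) ^ (-β) with hq_def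
  set p : EuclideanSpace ℝ (Fin n) → ℝ := fun x => c * (q x + d * q (t⁻¹ • x)) with hp_def
  have hq_pos : ∀ x, 0 < q x := fun x => by rw [hq_def]; positivity
  have hp_pos : ∀ x, 0 < p x := fun x => by
    rw [hp_def]
    have := hq_pos x; have := hq_pos (t⁻¹ • x)
    positivity
  have hsetu : {x : EuclideanSpace ℝ (Fin n) | 0 < p x} = Set.univ :=
    Set.eq_univ_of_forall hp_pos
  -- smoothness
  have hq_cd : ContDiff ℝ (⊤ : ℕ∞) q := by
    rw [hq_def]
    exact (contDiff_const.add (contDiff_norm_sq ℝ)).rpow_const_of_ne (fun x => by positivity)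
  have hq2_cd : ContDiff ℝ (⊤ : ℕ∞) (fun x : EuclideanSpace ℝ (Fin n) => q (t⁻¹ • x)) :=
    hq_cd.comp (contDiff_id.const_smul t⁻¹)
  have hp_cd : ContDiff ℝ (⊤ : ℕ∞) p := by
    rw [hp_def]
    exact contDiff_const.mul (hq_cd.add (contDiff_const.mul hq2_cd))
  -- scaling helper
  have hscale : ∀ f : EuclideanSpace ℝ (Fin n) → ℝ,
      (∫ x, f (t⁻¹ • x)) = t ^ ((n:ℝ)) * ∫ x, f x := by
    intro f
    rw [Measure.integral_comp_inv_smul_of_nonneg volume f ht0.le]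
    rw [finrank_euclideanSpace_fin, smul_eq_mul, ← Real.rpow_natCast t n]
  -- integrability of p
  have hq2_int : Integrable (fun x : EuclideanSpace ℝ (Fin n) => q (t⁻¹ • x)) := by
    rw [hq_def]
    exact (hq_def ▸ hq_int).comp_smul (inv_ne_zero ht0.ne')
  have hq_int' : Integrable q := hq_def ▸ hq_int
  have hp_int : Integrable p := by
    rw [hp_def]
    exact (hq_int'.add (hq2_int.const_mul d)).const_mul c
  -- total mass 1
  have hq_val : (∫ x, q (t⁻¹ • x)) = t ^ ((n:ℝ)) * A := by rw [hscale q, hA_def, hq_def]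
  have hdtn : d * t ^ ((n:ℝ)) = b := by
    rw [hd_def, mul_assoc, ← Real.rpow_add ht0]
    simp
  have hp_mass : (∫ x, p x) = 1 := by
    rw [hp_def]
    simp only
    rw [MeasureTheory.integral_const_mul, MeasureTheory.integral_add hq_int'
      (hq2_int.const_mul d), MeasureTheory.integral_const_mul, hq_val]
    have hqA : (∫ x, q x) = A := by rw [hA_def, hq_def]
    rw [hqA]
    have h1 : A + d * (t ^ ((n:ℝ)) * A) = A * (1 + b) := by
      rw [← hdtn]; ring
    rw [h1, hc_def]
    exact inv_mul_cancel₀ (by positivity)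
  -- pointwise identity for q ^ α
  have hrpα : ∀ x : EuclideanSpace ℝ (Fin n), q x ^ α = (1 + ‖x‖ ^ 2) ^ (-(α * β)) := by
    intro x
    rw [hq_def]
    simp only
    rw [← Real.rpow_mul (by positivity)]
    ring_nf
  -- integrability of p ^ α
  have hq2α_int : Integrable
      (fun x : EuclideanSpace ℝ (Fin n) => (1 + ‖t⁻¹ • x‖ ^ 2) ^ (-(α * β))) :=
    hAA_int.comp_smul (inv_ne_zero ht0.ne')
  have hpα_cont : Continuous (fun x => p x ^ α) :=
    hp_cd.continuous.rpow_const (fun x => Or.inl (hp_pos x).ne')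
  have hpα_bound : ∀ x, p x ^ α ≤
      c ^ α * ((1 + ‖x‖ ^ 2) ^ (-(α * β)) + d ^ α * (1 + ‖t⁻¹ • x‖ ^ 2) ^ (-(α * β))) := by
    intro x
    have h1 : p x ^ α = c ^ α * (q x + d * q (t⁻¹ • x)) ^ α := by
      rw [hp_def]
      simp only
      have hx1 := (hq_pos x).le
      have hx2 := (hq_pos (t⁻¹ • x)).le
      rw [Real.mul_rpow hc0.le (add_nonneg hx1 (mul_nonneg hd0.le hx2))]
    rw [h1]
    have h2 : (q x + d * q (t⁻¹ • x)) ^ α ≤ (q x) ^ α + (d * q (t⁻¹ • x)) ^ α :=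
      myAddRpow (hq_pos x).le (mul_nonneg hd0.le (hq_pos _).le) hα0.le hαlt1.le
    have h3 : (d * q (t⁻¹ • x)) ^ α = d ^ α * (1 + ‖t⁻¹ • x‖ ^ 2) ^ (-(α * β)) := by
      rw [Real.mul_rpow hd0.le (hq_pos _).le, hrpα]
    calc c ^ α * (q x + d * q (t⁻¹ • x)) ^ α
        ≤ c ^ α * ((q x) ^ α + (d * q (t⁻¹ • x)) ^ α) :=
          mul_le_mul_of_nonneg_left h2 (Real.rpow_nonneg hc0.le α)
      _ = c ^ α * ((1 + ‖x‖ ^ 2) ^ (-(α * β)) + d ^ α * (1 + ‖t⁻¹ • x‖ ^ 2) ^ (-(α * β))) := by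
          rw [hrpα, h3]
  have hpα_int : Integrable (fun x => p x ^ α) := by
    refine Integrable.mono' ((hAA_int.add (hq2α_int.const_mul (d ^ α))).const_mul (c ^ α))
      hpα_cont.aestronglyMeasurable ?_
    filter_upwards with x
    rw [Real.norm_eq_abs, abs_of_nonneg (Real.rpow_nonneg (hp_pos x).le α)]
    exact hpα_bound x
  -- lower bound for S
  have hSlb_pt : ∀ x, (c * d) ^ α * (1 + ‖t⁻¹ • x‖ ^ 2) ^ (-(α * β)) ≤ p x ^ α := by
    intro x
    have h1 : c * d * q (t⁻¹ • x) ≤ p x := by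
      rw [hp_def]
      simp only
      have h2 : c * d * q (t⁻¹ • x) = c * (d * q (t⁻¹ • x)) := by ring
      rw [h2]
      exact mul_le_mul_of_nonneg_left (le_add_of_nonneg_left (hq_pos x).le) hc0.le
    calc (c * d) ^ α * (1 + ‖t⁻¹ • x‖ ^ 2) ^ (-(α * β))
        = (c * d * q (t⁻¹ • x)) ^ α := by
          rw [Real.mul_rpow (by positivity) (hq_pos _).le, hrpα]
      _ ≤ p x ^ α := Real.rpow_le_rpow
          (mul_nonneg (mul_nonneg hc0.le hd0.le) (hq_pos _).le) h1 hα0.le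
  have hS_lb : ((2 * A)⁻¹) ^ α * AA * t ^ (2:ℝ) ≤ ∫ x, p x ^ α := by
    have h1 : (∫ x : EuclideanSpace ℝ (Fin n), (c * d) ^ α * (1 + ‖t⁻¹ • x‖ ^ 2) ^ (-(α * β))) ≤ ∫ x, p x ^ α :=
      integral_mono (hq2α_int.const_mul _) hpα_int hSlb_pt
    have h2 : (∫ x : EuclideanSpace ℝ (Fin n), (c * d) ^ α * (1 + ‖t⁻¹ • x‖ ^ 2) ^ (-(α * β)))
        = (c * d) ^ α * (t ^ ((n:ℝ)) * AA) := by
      rw [MeasureTheory.integral_const_mul,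
        hscale (fun y => (1 + ‖y‖ ^ 2) ^ (-(α * β))), hAA_def]
    have h3 : (c * d) ^ α * (t ^ ((n:ℝ)) * AA) = c ^ α * AA * t ^ (2:ℝ) := by
      rw [Real.mul_rpow hc0.le hd0.le]
      have h4 : t ^ ((n:ℝ)) = t ^ ((n:ℝ) - 2) * t ^ (2:ℝ) := by
        rw [← Real.rpow_add ht0]; ring_nf
      rw [h4]
      linear_combination c ^ α * t ^ (2:ℝ) * AA * hdα
    have h5 : ((2 * A)⁻¹) ^ α ≤ c ^ α := Real.rpow_le_rpow (by positivity) hcge hα0.le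
    have ht2 : (0:ℝ) ≤ t ^ (2:ℝ) := Real.rpow_nonneg ht0.le _
    have h6 : ((2 * A)⁻¹) ^ α * AA * t ^ (2:ℝ) ≤ c ^ α * AA * t ^ (2:ℝ) :=
      mul_le_mul_of_nonneg_right (mul_le_mul_of_nonneg_right h5 hAA.le) ht2
    rw [h2, h3] at h1
    linarith
  have hS0 : 0 < ∫ x, p x ^ α := by
    refine lt_of_lt_of_le ?_ hS_lb
    have : (0:ℝ) < t ^ (2:ℝ) := Real.rpow_pos_of_pos ht0 _
    positivity
  -- derivative of p
  set D : EuclideanSpace ℝ (Fin n) → (EuclideanSpace ℝ (Fin n) →L[ℝ] ℝ) :=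
    fun y => (-(2 * β) * (1 + ‖y‖ ^ 2) ^ (-β - 1)) • (innerSL ℝ y) with hD_def
  have hD : ∀ y, HasFDerivAt q (D y) y := by
    intro y; rw [hq_def, hD_def]; exact myHasFDeriv β y
  have hsm : ∀ x : EuclideanSpace ℝ (Fin n), HasFDerivAt
      (fun y : EuclideanSpace ℝ (Fin n) => t⁻¹ • y)
      (t⁻¹ • ContinuousLinearMap.id ℝ (EuclideanSpace ℝ (Fin n))) x :=
    fun x => (hasFDerivAt_id x).const_smul t⁻¹
  set Dp : EuclideanSpace ℝ (Fin n) → (EuclideanSpace ℝ (Fin n) →L[ℝ] ℝ) := fun x =>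
    c • (D x + d • ((D (t⁻¹ • x)).comp
      (t⁻¹ • ContinuousLinearMap.id ℝ (EuclideanSpace ℝ (Fin n))))) with hDp_def
  have hq2' : ∀ x, HasFDerivAt (fun y => q (t⁻¹ • y))
      ((D (t⁻¹ • x)).comp (t⁻¹ • ContinuousLinearMap.id ℝ (EuclideanSpace ℝ (Fin n)))) x :=
    fun x => (hD (t⁻¹ • x)).comp x (hsm x)
  have hp' : ∀ x, HasFDerivAt p (Dp x) x := by
    intro x
    rw [hp_def, hDp_def]
    have h1 := ((hD x).add ((hq2' x).const_mul d)).const_mul c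
    simpa [smul_add, smul_smul] using h1
  have hgradnorm : ∀ x, ‖gradient p x‖ = ‖Dp x‖ := fun x => by
    rw [myNormGradient, (hp' x).fderiv]
  set ub : EuclideanSpace ℝ (Fin n) → ℝ :=
    fun y => 2 * β * (1 + ‖y‖ ^ 2) ^ (-β - 1) * ‖y‖ with hub_def
  have hub_nonneg : ∀ y, 0 ≤ ub y := fun y => by
    rw [hub_def]
    have : (0:ℝ) ≤ (1 + ‖y‖ ^ 2) ^ (-β - 1) := Real.rpow_nonneg (by positivity) _
    have := norm_nonneg y
    positivity
  have hubD : ∀ y, ‖D y‖ ≤ ub y := fun y => by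
    rw [hD_def, hub_def]; exact myDerivNormBound β hβ0.le y
  have hDp_le : ∀ x, ‖Dp x‖ ≤ c * ub x + c * d * t⁻¹ * ub (t⁻¹ • x) := by
    intro x
    rw [hDp_def]
    have h0 : ‖(D (t⁻¹ • x)).comp (t⁻¹ • ContinuousLinearMap.id ℝ (EuclideanSpace ℝ (Fin n)))‖
        ≤ ub (t⁻¹ • x) * t⁻¹ := by
      refine le_trans (ContinuousLinearMap.opNorm_comp_le _ _) ?_
      have h1 : ‖t⁻¹ • ContinuousLinearMap.id ℝ (EuclideanSpace ℝ (Fin n))‖ ≤ t⁻¹ := by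
        have hns := norm_smul t⁻¹ (ContinuousLinearMap.id ℝ (EuclideanSpace ℝ (Fin n)))
        rw [hns, Real.norm_eq_abs, abs_of_nonneg (inv_nonneg.2 ht0.le)]
        calc t⁻¹ * ‖ContinuousLinearMap.id ℝ (EuclideanSpace ℝ (Fin n))‖
            ≤ t⁻¹ * 1 := mul_le_mul_of_nonneg_left ContinuousLinearMap.norm_id_le
              (inv_nonneg.2 ht0.le)
          _ = t⁻¹ := mul_one _
      exact mul_le_mul (hubD _) h1 (norm_nonneg _) (hub_nonneg _)
    have h2 : ‖D x + d • ((D (t⁻¹ • x)).comp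
        (t⁻¹ • ContinuousLinearMap.id ℝ (EuclideanSpace ℝ (Fin n))))‖
        ≤ ub x + d * (ub (t⁻¹ • x) * t⁻¹) := by
      refine le_trans (norm_add_le _ _) ?_
      have h3 : ‖d • ((D (t⁻¹ • x)).comp
          (t⁻¹ • ContinuousLinearMap.id ℝ (EuclideanSpace ℝ (Fin n))))‖
          ≤ d * (ub (t⁻¹ • x) * t⁻¹) := by
        have hns := norm_smul d ((D (t⁻¹ • x)).comp
          (t⁻¹ • ContinuousLinearMap.id ℝ (EuclideanSpace ℝ (Fin n))))
        rw [hns, Real.norm_eq_abs, abs_of_nonneg hd0.le]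
        exact mul_le_mul_of_nonneg_left h0 hd0.le
      exact add_le_add (hubD x) h3
    calc ‖c • (D x + d • ((D (t⁻¹ • x)).comp
          (t⁻¹ • ContinuousLinearMap.id ℝ (EuclideanSpace ℝ (Fin n)))))‖
        = c * ‖D x + d • ((D (t⁻¹ • x)).comp
          (t⁻¹ • ContinuousLinearMap.id ℝ (EuclideanSpace ℝ (Fin n))))‖ := by
          have hns := norm_smul c (D x + d • ((D (t⁻¹ • x)).comp
            (t⁻¹ • ContinuousLinearMap.id ℝ (EuclideanSpace ℝ (Fin n)))))
          rw [hns, Real.norm_eq_abs, abs_of_nonneg hc0.le]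
      _ ≤ c * (ub x + d * (ub (t⁻¹ • x) * t⁻¹)) := mul_le_mul_of_nonneg_left h2 hc0.le
      _ = c * ub x + c * d * t⁻¹ * ub (t⁻¹ • x) := by ring
  -- pointwise bound for the Fisher integrand
  have hpoint : ∀ x, ‖gradient p x‖ ^ 2 * p x ^ (α - 2) ≤
      2 * c ^ α * (4 * β ^ 2 * (1 + ‖x‖ ^ 2) ^ (-(α * β + 1)))
      + 2 * (c ^ α * d ^ α * (t⁻¹) ^ 2) *
        (4 * β ^ 2 * (1 + ‖t⁻¹ • x‖ ^ 2) ^ (-(α * β + 1))) := by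
    intro x
    have hgle : ‖gradient p x‖ ≤ c * ub x + c * d * t⁻¹ * ub (t⁻¹ • x) := by
      rw [hgradnorm x]; exact hDp_le x
    have hu : 0 ≤ c * ub x := mul_nonneg hc0.le (hub_nonneg x)
    have hv : 0 ≤ c * d * t⁻¹ * ub (t⁻¹ • x) :=
      mul_nonneg (mul_nonneg (mul_nonneg hc0.le hd0.le) (inv_nonneg.2 ht0.le))
        (hub_nonneg _)
    have hsq : ‖gradient p x‖ ^ 2 ≤
        2 * (c * ub x) ^ 2 + 2 * (c * d * t⁻¹ * ub (t⁻¹ • x)) ^ 2 :=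
      mySqBound (norm_nonneg _) hgle hu hv
    have hle1 : c * q x ≤ p x := by
      rw [hp_def]
      exact mul_le_mul_of_nonneg_left
        (le_add_of_nonneg_right (mul_nonneg hd0.le (hq_pos _).le)) hc0.le
    have hle2 : c * d * q (t⁻¹ • x) ≤ p x := by
      rw [hp_def]
      have h1 : c * d * q (t⁻¹ • x) = c * (d * q (t⁻¹ • x)) := by ring
      rw [h1]
      exact mul_le_mul_of_nonneg_left (le_add_of_nonneg_left (hq_pos x).le) hc0.le
    have hw1 : p x ^ (α - 2) ≤ (c * q x) ^ (α - 2) :=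
      Real.rpow_le_rpow_of_nonpos (mul_pos hc0 (hq_pos x)) hle1 (by linarith)
    have hw2 : p x ^ (α - 2) ≤ (c * d * q (t⁻¹ • x)) ^ (α - 2) :=
      Real.rpow_le_rpow_of_nonpos (mul_pos (mul_pos hc0 hd0) (hq_pos _)) hle2 (by linarith)
    have hppow : 0 ≤ p x ^ (α - 2) := Real.rpow_nonneg (hp_pos x).le _
    have hstep : ‖gradient p x‖ ^ 2 * p x ^ (α - 2) ≤
        2 * (c * ub x) ^ 2 * (c * q x) ^ (α - 2)
        + 2 * (c * d * t⁻¹ * ub (t⁻¹ • x)) ^ 2 * (c * d * q (t⁻¹ • x)) ^ (α - 2) := by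
      have h1 : ‖gradient p x‖ ^ 2 * p x ^ (α - 2) ≤
          (2 * (c * ub x) ^ 2 + 2 * (c * d * t⁻¹ * ub (t⁻¹ • x)) ^ 2) * p x ^ (α - 2) :=
        mul_le_mul_of_nonneg_right hsq hppow
      have hexpand : (2 * (c * ub x) ^ 2 + 2 * (c * d * t⁻¹ * ub (t⁻¹ • x)) ^ 2)
          * p x ^ (α - 2)
          = 2 * (c * ub x) ^ 2 * p x ^ (α - 2)
          + 2 * (c * d * t⁻¹ * ub (t⁻¹ • x)) ^ 2 * p x ^ (α - 2) := by ring
      have h2 : 2 * (c * ub x) ^ 2 * p x ^ (α - 2)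
          ≤ 2 * (c * ub x) ^ 2 * (c * q x) ^ (α - 2) :=
        mul_le_mul_of_nonneg_left hw1 (by positivity)
      have h3 : 2 * (c * d * t⁻¹ * ub (t⁻¹ • x)) ^ 2 * p x ^ (α - 2)
          ≤ 2 * (c * d * t⁻¹ * ub (t⁻¹ • x)) ^ 2 * (c * d * q (t⁻¹ • x)) ^ (α - 2) :=
        mul_le_mul_of_nonneg_left hw2 (by positivity)
      rw [hexpand] at h1
      linarith
    have hterm1 : 2 * (c * ub x) ^ 2 * (c * q x) ^ (α - 2)
        ≤ 2 * c ^ α * (4 * β ^ 2 * (1 + ‖x‖ ^ 2) ^ (-(α * β + 1))) := by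
      have e1 : (c * q x) ^ (α - 2) = c ^ (α - 2) * q x ^ (α - 2) :=
        Real.mul_rpow hc0.le (hq_pos x).le
      have e2 : 2 * (c * ub x) ^ 2 * (c ^ (α - 2) * q x ^ (α - 2))
          = 2 * (c ^ 2 * c ^ (α - 2)) * (ub x ^ 2 * q x ^ (α - 2)) := by ring
      have e3 : c ^ 2 * c ^ (α - 2) = c ^ α := mySqMulRpow hc0 α
      have e4 : ub x ^ 2 * q x ^ (α - 2) ≤ 4 * β ^ 2 * (1 + ‖x‖ ^ 2) ^ (-(α * β + 1)) := by
        rw [hub_def, hq_def]; exact myKeyPointwise α β x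
      rw [e1, e2, e3]
      refine mul_le_mul_of_nonneg_left e4 ?_
      have := Real.rpow_nonneg hc0.le α
      linarith
    have hterm2 : 2 * (c * d * t⁻¹ * ub (t⁻¹ • x)) ^ 2 * (c * d * q (t⁻¹ • x)) ^ (α - 2)
        ≤ 2 * (c ^ α * d ^ α * (t⁻¹) ^ 2) *
          (4 * β ^ 2 * (1 + ‖t⁻¹ • x‖ ^ 2) ^ (-(α * β + 1))) := by
      have e1 : (c * d * q (t⁻¹ • x)) ^ (α - 2)
          = (c * d) ^ (α - 2) * q (t⁻¹ • x) ^ (α - 2) :=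
        Real.mul_rpow (mul_nonneg hc0.le hd0.le) (hq_pos _).le
      have e2 : 2 * (c * d * t⁻¹ * ub (t⁻¹ • x)) ^ 2
            * ((c * d) ^ (α - 2) * q (t⁻¹ • x) ^ (α - 2))
          = 2 * ((c * d) ^ 2 * (c * d) ^ (α - 2)) * (t⁻¹) ^ 2
            * (ub (t⁻¹ • x) ^ 2 * q (t⁻¹ • x) ^ (α - 2)) := by ring
      have e3 : (c * d) ^ 2 * (c * d) ^ (α - 2) = (c * d) ^ α :=
        mySqMulRpow (mul_pos hc0 hd0) α
      have e35 : (c * d) ^ α = c ^ α * d ^ α := Real.mul_rpow hc0.le hd0.le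
      have e4 : ub (t⁻¹ • x) ^ 2 * q (t⁻¹ • x) ^ (α - 2)
          ≤ 4 * β ^ 2 * (1 + ‖t⁻¹ • x‖ ^ 2) ^ (-(α * β + 1)) := by
        rw [hub_def, hq_def]; exact myKeyPointwise α β (t⁻¹ • x)
      rw [e1, e2, e3, e35]
      have e5 : 2 * (c ^ α * d ^ α) * (t⁻¹) ^ 2
            * (ub (t⁻¹ • x) ^ 2 * q (t⁻¹ • x) ^ (α - 2))
          = 2 * (c ^ α * d ^ α * (t⁻¹) ^ 2)
            * (ub (t⁻¹ • x) ^ 2 * q (t⁻¹ • x) ^ (α - 2)) := by ring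
      rw [e5]
      refine mul_le_mul_of_nonneg_left e4 ?_
      have h6 := Real.rpow_nonneg hc0.le α
      have h7 := Real.rpow_nonneg hd0.le α
      positivity
    linarith
  -- integrability of the Fisher integrand
  have hH2_int : Integrable (fun x : EuclideanSpace ℝ (Fin n) =>
      4 * β ^ 2 * (1 + ‖t⁻¹ • x‖ ^ 2) ^ (-(α * β + 1))) :=
    hH_int.comp_smul (inv_ne_zero ht0.ne')
  have hg2_int : Integrable (fun x : EuclideanSpace ℝ (Fin n) =>
      2 * c ^ α * (4 * β ^ 2 * (1 + ‖x‖ ^ 2) ^ (-(α * β + 1)))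
      + 2 * (c ^ α * d ^ α * (t⁻¹) ^ 2) *
        (4 * β ^ 2 * (1 + ‖t⁻¹ • x‖ ^ 2) ^ (-(α * β + 1)))) :=
    (hH_int.const_mul _).add (hH2_int.const_mul _)
  have hieq : (fun x => ‖gradient p x‖ ^ 2 * p x ^ (α - 2))
      = fun x => ‖fderiv ℝ p x‖ ^ 2 * p x ^ (α - 2) :=
    funext fun x => by rw [myNormGradient]
  have hcont2 : Continuous fun x => ‖fderiv ℝ p x‖ ^ 2 * p x ^ (α - 2) :=
    ((hp_cd.continuous_fderiv (by simp)).norm.pow 2).mul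
      (hp_cd.continuous.rpow_const fun x => Or.inl (hp_pos x).ne')
  have hJ_int : Integrable (fun x => ‖gradient p x‖ ^ 2 * p x ^ (α - 2)) := by
    refine Integrable.mono' hg2_int ?_ ?_
    · rw [hieq]; exact hcont2.aestronglyMeasurable
    · filter_upwards with x
      rw [Real.norm_eq_abs, abs_of_nonneg
        (mul_nonneg (pow_nonneg (norm_nonneg _) 2) (Real.rpow_nonneg (hp_pos x).le _))]
      exact hpoint x
  -- upper bound for the Fisher integral
  have hJ_le : (∫ x, ‖gradient p x‖ ^ 2 * p x ^ (α - 2)) ≤ 4 * c ^ α * JH := by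
    have h1 := integral_mono hJ_int hg2_int hpoint
    have h2 : (∫ x : EuclideanSpace ℝ (Fin n),
        (2 * c ^ α * (4 * β ^ 2 * (1 + ‖x‖ ^ 2) ^ (-(α * β + 1)))
        + 2 * (c ^ α * d ^ α * (t⁻¹) ^ 2) *
          (4 * β ^ 2 * (1 + ‖t⁻¹ • x‖ ^ 2) ^ (-(α * β + 1)))))
        = 2 * c ^ α * JH
        + 2 * (c ^ α * d ^ α * (t⁻¹) ^ 2) * (t ^ ((n:ℝ)) * JH) := by
      rw [MeasureTheory.integral_add (hH_int.const_mul _) (hH2_int.const_mul _),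
        MeasureTheory.integral_const_mul (2 * c ^ α),
        MeasureTheory.integral_const_mul (2 * (c ^ α * d ^ α * (t⁻¹) ^ 2)),
        hscale (fun y => 4 * β ^ 2 * (1 + ‖y‖ ^ 2) ^ (-(α * β + 1))), ← hJH_def]
    have h4 : (t⁻¹) ^ 2 * t ^ ((n:ℝ)) = t ^ ((n:ℝ) - 2) := by
      have : (t⁻¹) ^ 2 = t ^ (-(2:ℝ)) := by
        rw [← Real.rpow_natCast t⁻¹ 2, Real.inv_rpow ht0.le, ← Real.rpow_neg ht0.le]
        norm_num
      rw [this, ← Real.rpow_add ht0]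
      ring_nf
    have h3 : 2 * c ^ α * JH
        + 2 * (c ^ α * d ^ α * (t⁻¹) ^ 2) * (t ^ ((n:ℝ)) * JH) = 4 * c ^ α * JH := by
      linear_combination (2 * c ^ α * JH) * hdα + (2 * c ^ α * d ^ α * JH) * h4
    rw [h2, h3] at h1
    exact h1
  have hJ_nonneg : 0 ≤ ∫ x, ‖gradient p x‖ ^ 2 * p x ^ (α - 2) :=
    integral_nonneg fun x =>
      mul_nonneg (pow_nonneg (norm_nonneg _) 2) (Real.rpow_nonneg (hp_pos x).le _)
  -- conclusion
  refine ⟨p, hp_cd, fun x => (hp_pos x).le, hp_int, hp_mass, hpα_int, ?_, ?_⟩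
  · rw [hsetu]
    exact MeasureTheory.integrableOn_univ.2 hJ_int
  · unfold renyiEntropyPower renyiFisherInfo
    rw [hsetu, MeasureTheory.setIntegral_univ]
    have hexp : -2 / ((n:ℝ) * (α - 1)) = 2 / m := by
      rw [show (n:ℝ) * (α - 1) = -((n:ℝ) * (1 - α)) by ring, ← hm_def, div_neg, neg_div, neg_neg]
    rw [hexp]
    set S : ℝ := ∫ x, p x ^ α with hS_def
    set J : ℝ := ∫ x, ‖gradient p x‖ ^ 2 * p x ^ (α - 2) with hJ_def
    have hfe : S ^ (2 / m) * (α * J / S) = α * J * S ^ e := by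
      rw [he_def, Real.rpow_sub hS0, Real.rpow_one]
      ring
    rw [hfe]
    have hS0' : (0:ℝ) < ((2 * A)⁻¹) ^ α * AA * t ^ (2:ℝ) := by
      have h1 : (0:ℝ) < ((2 * A)⁻¹) ^ α := Real.rpow_pos_of_pos (by positivity) _
      have h2 : (0:ℝ) < t ^ (2:ℝ) := Real.rpow_pos_of_pos ht0 _
      positivity
    have hSe : S ^ e ≤ (((2 * A)⁻¹) ^ α * AA * t ^ (2:ℝ)) ^ e :=
      Real.rpow_le_rpow_of_nonpos hS0' hS_lb he.le
    have hSe_pos : (0:ℝ) ≤ S ^ e := Real.rpow_nonneg hS0.le e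
    have hcαle : c ^ α ≤ (A⁻¹) ^ α := Real.rpow_le_rpow hc0.le hcle hα0.le
    have hJle4 : α * J ≤ α * (4 * (A⁻¹) ^ α * JH) := by
      have h1 : α * J ≤ α * (4 * c ^ α * JH) := mul_le_mul_of_nonneg_left hJ_le hα0.le
      have h2 : 4 * c ^ α * JH ≤ 4 * (A⁻¹) ^ α * JH :=
        mul_le_mul_of_nonneg_right
          (mul_le_mul_of_nonneg_left hcαle (by norm_num)) hJH
      have h3 : α * (4 * c ^ α * JH) ≤ α * (4 * (A⁻¹) ^ α * JH) :=
        mul_le_mul_of_nonneg_left h2 hα0.le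
      linarith
    have hJ0 : (0:ℝ) ≤ α * (4 * (A⁻¹) ^ α * JH) := by
      have h1 : (0:ℝ) ≤ (A⁻¹) ^ α := Real.rpow_nonneg (by positivity) _
      positivity
    have hfinal1 : α * J * S ^ e
        ≤ α * (4 * (A⁻¹) ^ α * JH) * (((2 * A)⁻¹) ^ α * AA * t ^ (2:ℝ)) ^ e :=
      mul_le_mul hJle4 hSe hSe_pos hJ0
    have hfinal2 : α * (4 * (A⁻¹) ^ α * JH) * (((2 * A)⁻¹) ^ α * AA * t ^ (2:ℝ)) ^ e
        = C * t ^ (2 * e) := by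
      rw [hC_def]
      have h1 : (((2 * A)⁻¹) ^ α * AA * t ^ (2:ℝ)) ^ e
          = (((2 * A)⁻¹) ^ α * AA) ^ e * (t ^ (2:ℝ)) ^ e := by
        refine Real.mul_rpow ?_ (Real.rpow_nonneg ht0.le _)
        have h2 : (0:ℝ) ≤ ((2 * A)⁻¹) ^ α := Real.rpow_nonneg (by positivity) _
        positivity
      rw [h1, ← Real.rpow_mul ht0.le]
      ring
    rw [hfinal2] at hfinal1
    exact lt_of_le_of_lt hfinal1 htε
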